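/- Let C be an L-infinity algebra over a field k of characteristic zero with C^i = 0 for all i ≤ 0. Then for any local Artin k-algebra (A, m_A), the homotopy relation on Maurer-Cartan elements of C ⊗ m_A is trivial: any Maurer-Cartan element ω ∈ MC(C)(A ⊗ k[t,dt]) is constant in t, i.e., ω lies in MC(C)(A) ⊗ 1. In particular Def(C)(A) = MC(C)(A). -/
import Mathlib


open TensorProduct

/-- Let `C` be an L∞-algebra over a field `k` of characteristic zero with
`Cⁱ = 0` for all `i ≤ 0`, and let `(A, m_A)` be a local Artin `k`-algebra.  A Maurer–Cartan
element `ω` of `C ⊗ m_A ⊗ k[t,dt]` decomposes as `ω = γ(t) + a(t)dt` with `γ(t)` a polynomial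
with coefficients in `C¹ ⊗ m_A` and `a(t)` a polynomial with coefficients in `C⁰ ⊗ m_A`;
the Maurer–Cartan equation has a `k[t]`-component (the Maurer–Cartan equation of `γ(t)`,
coefficientwise in `t`) and a `dt`-component `γ'(t) = Σ_n ℓ_{n+1}(a(t), γ(t), …, γ(t))/n!`.
Then `ω` is constant in `t`: `γ(t) = γ(0)` and `γ(0) ∈ MC(C)(A)`.  In particular the homotopy
relation on Maurer–Cartan elements is trivial and `Def(C)(A) = MC(C)(A)`. -/
theorem statement0
    (k : Type) [Field k] [CharZero k]
    -- the graded pieces of the L∞-algebra C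
    (C : ℤ → Type) [∀ i, AddCommGroup (C i)] [∀ i, Module k (C i)]
    -- C is concentrated in degrees ≥ 1
    (hC : ∀ i : ℤ, i ≤ 0 → Subsingleton (C i))
    -- (A, m_A) a local Artin k-algebra
    (A : Type) [CommRing A] [Algebra k A] [IsLocalRing A] [IsArtinianRing A]
    -- the L∞ operations of C, extended to C ⊗ m_A: operations on degree-1 inputs,
    (ell : (n : ℕ) → MultilinearMap k
      (fun _ : Fin n => (C 1) ⊗[k] ((IsLocalRing.maximalIdeal A).restrictScalars k))
      ((C 2) ⊗[k] ((IsLocalRing.maximalIdeal A).restrictScalars k)))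
    -- and the operations ℓ_{n+1} with one degree-0 input and n degree-1 inputs
    (ellMix : (n : ℕ) →
      ((C 0) ⊗[k] ((IsLocalRing.maximalIdeal A).restrictScalars k)) →ₗ[k]
      MultilinearMap k
        (fun _ : Fin n => (C 1) ⊗[k] ((IsLocalRing.maximalIdeal A).restrictScalars k))
        ((C 1) ⊗[k] ((IsLocalRing.maximalIdeal A).restrictScalars k)))
    -- ω = γ(t) + a(t)dt ∈ MC(C)(A ⊗ k[t,dt]), given by its polynomial coefficients
    (γ : ℕ →₀ ((C 1) ⊗[k] ((IsLocalRing.maximalIdeal A).restrictScalars k)))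
    (a : ℕ →₀ ((C 0) ⊗[k] ((IsLocalRing.maximalIdeal A).restrictScalars k)))
    -- the k[t]-component of the Maurer–Cartan equation, coefficient of t^m:
    (hkt : ∀ m : ℕ,
      (∑ᶠ n : ℕ, if 1 ≤ n then ((n.factorial : k))⁻¹ •
        (∑ x ∈ Finset.Nat.antidiagonalTuple n m, ell n (fun i => γ (x i))) else 0) = 0)
    -- the dt-component of the Maurer–Cartan equation, coefficient of t^m dt:
    (hdt : ∀ m : ℕ,
      ((m : k) + 1) • γ (m + 1)
        = ∑ᶠ n : ℕ, ((n.factorial : k))⁻¹ •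
            (∑ x ∈ Finset.Nat.antidiagonalTuple (n + 1) m,
              ellMix n (a (x 0)) (fun i => γ (x i.succ)))) :
    -- then γ is constant in t, and its value is a Maurer–Cartan element of C ⊗ m_A
    (∀ m : ℕ, 1 ≤ m → γ m = 0) ∧
    ((∑ᶠ n : ℕ, if 1 ≤ n then ((n.factorial : k))⁻¹ • ell n (fun _ => γ 0) else 0) = 0) := by
  haveI : Subsingleton (C 0) := hC 0 le_rfl
  haveI : Subsingleton ((C 0) ⊗[k] ((IsLocalRing.maximalIdeal A).restrictScalars k)) :=
    inferInstance
  have ha : ∀ p, a p = 0 := fun p => Subsingleton.elim _ _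
  have hγ : ∀ m : ℕ, 1 ≤ m → γ m = 0 := by
    intro m hm
    obtain ⟨m, rfl⟩ := Nat.exists_eq_add_of_le hm
    rw [add_comm]
    have h := hdt m
    simp only [ha, map_zero, MultilinearMap.zero_apply, smul_zero, Finset.sum_const_zero,
      finsum_zero] at h
    have hne : ((m : k) + 1) ≠ 0 := by
      have := Nat.cast_add_one_ne_zero (R := k) m
      simpa using this
    have h2 := congrArg (fun v => (((m : k) + 1)⁻¹) • v) h
    simpa [smul_smul, inv_mul_cancel₀ hne] using h2
  refine ⟨hγ, ?_⟩
  have h := hkt 0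
  simpa [Finset.Nat.antidiagonalTuple_zero_right] using h
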